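/- For every real number a there exists δ > 0 such that the function x ↦ x(1+x)e^{x} / r_a(x)² − 1/x − 2 log x is bounded on (0,δ). (In the paper's notation: the transformed conformal-geodesic initial datum satisfies f_r|_{scri⁻} = 1/r̃ + 2 log r̃ + O(1) as r̃ → 0⁺.) -/

import Mathlib

/-!
Near `0` one has `Ei(−x) = log x + O(1)`, because `Ei(−x) − log x` has derivative
`(e^{−x} − 1)/x ∈ [−1, 0]`. Hence `u_a = 1/x + L` with `L = log x + b`, `b = O(1)`, and writing
`(1 + x)e^x = 1 + s x` with `s = O(1)`,
`x(1 + x)e^x u_a² − 1/x − 2 log x = 2b + x L² + s (x u_a)²`,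
where `x L² = O(1)` since `x log² x → 0`, and `x u_a = 1 + x L = O(1)`.
-/

open Real Filter

noncomputable section

/-- `Eineg x = Ei(−x) = −∫_x^∞ e^{−t}/t dt`, the exponential integral. -/
def Eineg (x : ℝ) : ℝ := -∫ t in Set.Ioi x, Real.exp (-t) / t

/-- `u_a(x) = e^{−x}/x + a + Ei(−x)` for `x > 0`. -/
def u (a x : ℝ) : ℝ := Real.exp (-x) / x + a + Eineg x

/-- `r_a(x) = 1/u_a(x)` (meaningful on intervals where `u_a > 0`). -/
def rga (a x : ℝ) : ℝ := (u a x)⁻¹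

open Topology Set MeasureTheory Asymptotics

lemma integrableOn_exp_neg_div_Ioi {x : ℝ} (hx : 0 < x) :
    IntegrableOn (fun t => exp (-t) / t) (Ioi x) := by
  refine ((exp_neg_integrableOn_Ioi x one_pos).div_const x).mono' ?_ ?_
  · exact ((continuous_exp.comp continuous_neg).continuousOn.div continuousOn_id
      fun t ht => (hx.trans ht).ne').aestronglyMeasurable measurableSet_Ioi
  · filter_upwards [ae_restrict_mem measurableSet_Ioi] with t (ht : x < t)
    rw [norm_div, norm_of_nonneg (exp_pos _).le, norm_of_nonneg (hx.trans ht).le, neg_one_mul]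
    exact div_le_div_of_nonneg_left (exp_pos _).le hx ht.le

lemma Eineg_sub_Eineg {x y : ℝ} (hx : 0 < x) (hy : 0 < y) :
    Eineg x - Eineg y = ∫ t in y..x, exp (-t) / t := by
  rw [Eineg, Eineg, intervalIntegral.integral_symm, ← intervalIntegral.integral_Ioi_sub_Ioi'
    (integrableOn_exp_neg_div_Ioi hx) (integrableOn_exp_neg_div_Ioi hy)]
  ring

lemma abs_exp_neg_sub_one_div_le {t : ℝ} (ht : 0 < t) : |(exp (-t) - 1) / t| ≤ 1 := by
  rw [abs_div, abs_of_pos ht, div_le_one ht, abs_sub_comm,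
    abs_of_nonneg (sub_nonneg.2 (exp_le_one_iff.2 (neg_nonpos.2 ht.le)))]
  linarith [add_one_le_exp (-t)]

lemma abs_Eineg_sub_log_sub_le {x y : ℝ} (hx : 0 < x) (hy : 0 < y) :
    |(Eineg x - log x) - (Eineg y - log y)| ≤ |x - y| := by
  have hpos : ∀ t ∈ uIcc y x, 0 < t := fun t ht => lt_min hy hx |>.trans_le ht.1
  have hcont : ContinuousOn (fun t => exp (-t) / t) (uIcc y x) :=
    (continuous_exp.comp continuous_neg).continuousOn.div continuousOn_id
      fun t ht => (hpos t ht).ne'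
  have hinv : ContinuousOn (fun t : ℝ => t⁻¹) (uIcc y x) :=
    continuousOn_inv₀.mono fun t ht => (hpos t ht).ne'
  have hint : (Eineg x - log x) - (Eineg y - log y) = ∫ t in y..x, (exp (-t) - 1) / t := by
    rw [sub_sub_sub_comm, Eineg_sub_Eineg hx hy, ← log_div hx.ne' hy.ne',
      ← integral_inv_of_pos hy hx, ← intervalIntegral.integral_sub hcont.intervalIntegrable
        hinv.intervalIntegrable]
    congr 1 with t
    ring
  rw [hint, ← one_mul |x - y|]
  exact intervalIntegral.norm_integral_le_of_norm_le_const (f := fun t => (exp (-t) - 1) / t)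
    fun t ht => abs_exp_neg_sub_one_div_le (hpos t (uIoc_subset_uIcc ht))

lemma boundedAtFilter_Eineg_sub_log : BoundedAtFilter (𝓝[>] 0) fun x => Eineg x - log x := by
  refine (isBigO_one_iff ℝ).2 (isBoundedUnder_of_eventually_le (a := |Eineg 1| + 1) ?_)
  filter_upwards [Ioo_mem_nhdsGT one_pos] with x ⟨hx0, hx1⟩
  have := abs_Eineg_sub_log_sub_le hx0 one_pos
  rw [log_one, sub_zero, abs_of_neg (sub_neg.2 hx1)] at this
  rw [norm_eq_abs]
  linarith [abs_sub_abs_le_abs_sub (Eineg x - log x) (Eineg 1)]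

lemma boundedAtFilter_u_sub_inv_sub_log (a : ℝ) :
    BoundedAtFilter (𝓝[>] 0) fun x => u a x - x⁻¹ - log x := by
  have hexp : BoundedAtFilter (𝓝[>] 0) fun x => (exp (-x) - 1) / x :=
    (isBigO_one_iff ℝ).2 <| isBoundedUnder_of_eventually_le (a := 1) <|
      eventually_mem_nhdsWithin.mono fun x hx => abs_exp_neg_sub_one_div_le hx
  refine IsBigO.congr_left ((hexp.add (const_boundedAtFilter _ a)).add
    boundedAtFilter_Eineg_sub_log) fun x => ?_
  simp only [u, Pi.add_apply, Function.const_apply]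
  ring

lemma boundedAtFilter_div_of_hasDerivAt {f : ℝ → ℝ} {f' : ℝ} (hf : HasDerivAt f f' 0) :
    BoundedAtFilter (𝓝[≠] 0) fun x => (f x - f 0) / x := by
  refine (hf.tendsto_slope.isBigO_one ℝ).congr_left fun x => ?_
  simp [slope_def_field]

lemma tendsto_log_sq_mul_nhdsGT_zero : Tendsto (fun x => log x ^ 2 * x) (𝓝[>] 0) (𝓝 0) := by
  have := (tendsto_log_mul_rpow_nhdsGT_zero (r := 1 / 2) one_half_pos).pow 2
  rw [zero_pow two_ne_zero] at this
  refine this.congr' (eventually_mem_nhdsWithin.mono fun x (hx : 0 < x) => ?_)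
  rw [mul_pow, ← sqrt_eq_rpow, sq_sqrt hx.le]

lemma exists_Ioo_norm_le_of_boundedAtFilter {E : Type*} [Norm E] {f : ℝ → E} {a : ℝ}
    (hf : BoundedAtFilter (𝓝[>] a) f) : ∃ b > a, ∃ C : ℝ, ∀ x ∈ Ioo a b, ‖f x‖ ≤ C := by
  obtain ⟨C, hC⟩ := (isBigO_one_iff ℝ).1 hf
  obtain ⟨b, hab, hb⟩ := (nhdsGT_basis a).eventually_iff.1 hC
  exact ⟨b, hab, C, hb⟩

lemma boundedAtFilter_conformalGeodesicDatum (a : ℝ) :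
    BoundedAtFilter (𝓝[>] 0)
      fun x => x * (1 + x) * exp x / rga a x ^ 2 - 1 / x - 2 * log x := by
  set b := fun x => u a x - x⁻¹ - log x
  set s := fun x : ℝ => ((1 + x) * exp x - 1) / x
  have hb : BoundedAtFilter (𝓝[>] 0) b := boundedAtFilter_u_sub_inv_sub_log a
  have hs : BoundedAtFilter (𝓝[>] 0) s := by
    have := boundedAtFilter_div_of_hasDerivAt (f := fun x => (1 + x) * exp x)
      (((hasDerivAt_id' 0).const_add 1).mul (hasDerivAt_exp 0))
    exact IsBigO.congr_left (this.mono (nhdsGT_le_nhdsNE 0)) fun x => by simp [s]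
  have hid : BoundedAtFilter (𝓝[>] 0) fun x : ℝ => x :=
    (tendsto_nhdsWithin_of_tendsto_nhds tendsto_id).isBigO_one ℝ
  have hlog : BoundedAtFilter (𝓝[>] 0) fun x => log x * x := by
    have := tendsto_log_mul_rpow_nhdsGT_zero one_pos
    simp only [rpow_one] at this
    exact this.isBigO_one ℝ
  have hlog_sq : BoundedAtFilter (𝓝[>] 0) fun x => log x ^ 2 * x :=
    tendsto_log_sq_mul_nhdsGT_zero.isBigO_one ℝ
  have hxu : BoundedAtFilter (𝓝[>] 0) fun x => 1 + log x * x + x * b x :=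
    ((const_boundedAtFilter _ 1).add hlog).add (hid.mul hb)
  -- `2b + x log² x + 2 (x log x) b + x b² + s (x u_a)²`, with `x u_a = 1 + x log x + x b`
  refine IsBigO.congr' (((((const_boundedAtFilter _ 2).mul hb).add hlog_sq).add
    (((const_boundedAtFilter _ 2).mul hlog).mul hb)).add ((hid.mul hb).mul hb) |>.add
      ((hs.mul hxu).mul hxu)) ?_ EventuallyEq.rfl
  filter_upwards [self_mem_nhdsWithin] with x (hx : 0 < x)
  simp only [Pi.add_apply, Pi.mul_apply, Function.const_apply, b, s, rga, inv_pow, div_inv_eq_mul]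
  field_simp
  ring

/-- For every real `a`, the transformed conformal-geodesic initial datum
`f_r|_{scri⁻} = x(1+x)e^x/r_a(x)²` satisfies `f_r = 1/x + 2 log x + O(1)`. -/
theorem stmt_11 (a : ℝ) :
    ∃ δ > (0:ℝ), ∃ C : ℝ, ∀ x ∈ Set.Ioo (0:ℝ) δ,
      |x * (1 + x) * Real.exp x / (rga a x)^2 - 1/x - 2 * Real.log x| ≤ C := by
  exact exists_Ioo_norm_le_of_boundedAtFilter (boundedAtFilter_conformalGeodesicDatum a)
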